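/- In the ring R = H(K₁)/⟨π²⟩ with π = 2 + i + j + k, the element α = 1 - (i+j+k) satisfies α²¹ = -1 and has multiplicative order 42 = φ(49), i.e., α generates the unit group Rˣ. -/

import Mathlib

open Quaternion

def HK1 : Subring ℍ[ℤ] where
  carrier := {q | ∃ a b : ℤ, q = ⟨a, b, b, b⟩}
  mul_mem' := by
    rintro _ _ ⟨a, b, rfl⟩ ⟨c, d, rfl⟩
    refine ⟨a*c - 3*b*d, a*d + b*c, ?_⟩
    exact (by ext <;> simp <;> ring : (⟨a,b,b,b⟩ : ℍ[ℤ]) * ⟨c,d,d,d⟩ = ⟨a*c - 3*b*d, a*d + b*c, a*d + b*c, a*d + b*c⟩)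
  one_mem' := ⟨1, 0, by ext <;> simp⟩
  add_mem' := by
    rintro _ _ ⟨a, b, rfl⟩ ⟨c, d, rfl⟩
    exact ⟨a + c, b + d, by ext <;> rfl⟩
  zero_mem' := ⟨0, 0, by ext <;> simp⟩
  neg_mem' := by
    rintro _ ⟨a, b, rfl⟩
    exact ⟨-a, -b, by ext <;> rfl⟩

noncomputable instance : CommRing HK1 :=
  { (inferInstance : Ring HK1) with
    mul_comm := by
      rintro ⟨_, a, b, rfl⟩ ⟨_, c, d, rfl⟩
      apply Subtype.ext
      show (⟨a,b,b,b⟩ : ℍ[ℤ]) * ⟨c,d,d,d⟩ = (⟨c,d,d,d⟩ : ℍ[ℤ]) * ⟨a,b,b,b⟩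
      ext <;> simp <;> ring }

/-!
Since `ω = i + j + k` satisfies `ω² = -3` and `12² ≡ -3 (mod 49)`, the map `a + bω ↦ a + 12b`
is a ring homomorphism `HK1 → ℤ/49ℤ`. It is onto, and its kernel is `⟨π²⟩` because `π ↦ 14`
and `π² = 1 + 4ω`. So `R ≅ ℤ/49ℤ`, under which `α ↦ 1 - 12 = 38`, an element of order
`42 = φ(49)`: hence `α` generates `Rˣ`.
-/

theorem exists_eq_pow_of_orderOf_eq_card_units {M : Type*} [Monoid M] [Finite Mˣ] {g y : M}
    (hg : orderOf g = Nat.card Mˣ) (hy : IsUnit y) : ∃ n : ℕ, y = g ^ n := by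
  have hfin : IsOfFinOrder g := orderOf_pos_iff.mp (hg ▸ Nat.card_pos)
  have hu : orderOf hfin.unit = Nat.card Mˣ := by rw [← orderOf_units, hfin.val_unit, hg]
  have htop : Subgroup.zpowers hfin.unit = ⊤ :=
    Subgroup.card_eq_iff_eq_top _ |>.mp (by rw [Nat.card_zpowers, hu])
  obtain ⟨n, hn⟩ := (isOfFinOrder_of_finite hfin.unit).mem_powers_iff_mem_zpowers.mpr
    (htop ▸ Subgroup.mem_top hy.unit)
  refine ⟨n, ?_⟩
  rw [← hy.unit_spec, ← hn, Units.val_pow_eq_pow_val, hfin.val_unit]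

namespace HK1

def mk (a b : ℤ) : HK1 := ⟨⟨a, b, b, b⟩, ⟨a, b, rfl⟩⟩

theorem exists_eq_mk (x : HK1) : ∃ a b : ℤ, x = mk a b := by
  obtain ⟨_, a, b, rfl⟩ := x
  exact ⟨a, b, rfl⟩

theorem mk_mul_mk (a b c d : ℤ) : mk a b * mk c d = mk (a * c - 3 * b * d) (a * d + b * c) := by
  apply Subtype.ext
  change (⟨a, b, b, b⟩ : ℍ[ℤ]) * ⟨c, d, d, d⟩ = ⟨_, _, _, _⟩
  ext <;> simp <;> ring

def lift {S : Type*} [CommRing S] (r : S) (hr : r ^ 2 = -3) : HK1 →+* S where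
  toFun x := (x.1.re : S) + r * x.1.imI
  map_one' := by simp
  map_zero' := by simp
  map_add' x y := by
    simp only [Subring.coe_add, Quaternion.re_add, Quaternion.imI_add]
    push_cast
    ring
  map_mul' x y := by
    obtain ⟨a, b, rfl⟩ := exists_eq_mk x
    obtain ⟨c, d, rfl⟩ := exists_eq_mk y
    rw [mk_mul_mk]
    simp only [mk]
    push_cast
    linear_combination -(b : S) * d * hr

/-- `12` is the Hensel lift to `ℤ/49ℤ` of the root `-2` of `X² + 3` mod 7. -/
def toZMod49 : HK1 →+* ZMod 49 := lift 12 (by decide)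

theorem toZMod49_mk (a b : ℤ) : toZMod49 (mk a b) = a + 12 * b := rfl

theorem toZMod49_surjective : Function.Surjective toZMod49 := by
  intro z
  refine ⟨mk z.val 0, ?_⟩
  simp [toZMod49_mk]

theorem ker_toZMod49 : RingHom.ker toZMod49 = Ideal.span {mk 2 1 ^ 2} := by
  have hπ : mk 2 1 ^ 2 = mk 1 4 := by rw [sq, mk_mul_mk]; norm_num
  rw [hπ]
  apply le_antisymm
  · intro x hx
    obtain ⟨a, b, rfl⟩ := exists_eq_mk x
    have h49 : ((a + 12 * b : ℤ) : ZMod 49) = 0 := by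
      push_cast
      exact hx
    obtain ⟨m, hm⟩ := (ZMod.intCast_zmod_eq_zero_iff_dvd _ 49).mp h49
    refine Ideal.mem_span_singleton'.mpr ⟨mk m (b - 4 * m), ?_⟩
    rw [mk_mul_mk]
    congr 1 <;> push_cast at hm <;> linarith
  · rw [Ideal.span_le, Set.singleton_subset_iff]
    show toZMod49 (mk 1 4) = 0
    decide

noncomputable def quotientEquivZMod49 : HK1 ⧸ Ideal.span {mk 2 1 ^ 2} ≃+* ZMod 49 :=
  (Ideal.quotEquivOfEq ker_toZMod49.symm).trans
    (RingHom.quotientKerEquivOfSurjective toZMod49_surjective)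

end HK1

theorem orderOf_38_zmod49 : orderOf (38 : ZMod 49) = 42 := by
  apply orderOf_eq_of_pow_and_pow_div_prime (by norm_num) (by decide)
  intro p hp hdvd
  have := Nat.le_of_dvd (by norm_num) hdvd
  interval_cases p <;> first | omega | (norm_num at hp; done) | decide

theorem card_units_zmod49 : Nat.card (ZMod 49)ˣ = 42 := by
  rw [Nat.card_eq_fintype_card, ZMod.card_units_eq_totient]
  decide

theorem alpha_generates_units :
    (Ideal.Quotient.mk (Ideal.span {(⟨⟨2, 1, 1, 1⟩, ⟨2, 1, rfl⟩⟩ : HK1) ^ 2})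
      (⟨⟨1, -1, -1, -1⟩, ⟨1, -1, rfl⟩⟩ : HK1)) ^ 21 = -1 ∧
    orderOf (Ideal.Quotient.mk (Ideal.span {(⟨⟨2, 1, 1, 1⟩, ⟨2, 1, rfl⟩⟩ : HK1) ^ 2})
      (⟨⟨1, -1, -1, -1⟩, ⟨1, -1, rfl⟩⟩ : HK1)) = 42 ∧
    (∀ y : HK1 ⧸ Ideal.span {(⟨⟨2, 1, 1, 1⟩, ⟨2, 1, rfl⟩⟩ : HK1) ^ 2}, IsUnit y →
      ∃ n : ℕ, y = (Ideal.Quotient.mk (Ideal.span {(⟨⟨2, 1, 1, 1⟩, ⟨2, 1, rfl⟩⟩ : HK1) ^ 2})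
        (⟨⟨1, -1, -1, -1⟩, ⟨1, -1, rfl⟩⟩ : HK1)) ^ n) := by
  suffices h : ∀ α : HK1 ⧸ Ideal.span {HK1.mk 2 1 ^ 2}, HK1.quotientEquivZMod49 α = 38 →
      α ^ 21 = -1 ∧ orderOf α = 42 ∧ ∀ y, IsUnit y → ∃ n : ℕ, y = α ^ n from
    h _ (by decide)
  intro α hα
  have horder : orderOf α = 42 := by
    rw [← HK1.quotientEquivZMod49.toMulEquiv.orderOf_eq]
    exact hα ▸ orderOf_38_zmod49
  have hcard : Nat.card (HK1 ⧸ Ideal.span {HK1.mk 2 1 ^ 2})ˣ = 42 := by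
    rw [Nat.card_congr (Units.mapEquiv HK1.quotientEquivZMod49.toMulEquiv).toEquiv,
      card_units_zmod49]
  have : Finite (HK1 ⧸ Ideal.span {HK1.mk 2 1 ^ 2})ˣ :=
    Nat.finite_of_card_ne_zero (by simp [hcard])
  refine ⟨HK1.quotientEquivZMod49.injective ?_, horder, fun y hy ↦
    exists_eq_pow_of_orderOf_eq_card_units (horder.trans hcard.symm) hy⟩
  rw [map_pow, map_neg, map_one, hα]
  decide
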